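/- Let {u, v} be a non-tree edge of G with dep(u) ≥ dep(v), let w be the LCA of (u, v), and let C_e be the fundamental cycle of {u, v}, i.e., the simple cycle consisting of the edge {u, v} together with the tree path from u up to w and the tree path from v up to w. Then there is a path in the auxiliary graph G' of length at most 2·dep(p) whose vertex set contains every vertex of C_e other than w. -/

import Mathlib

/-! The path runs through the fundamental cycle without `w`: down the tree path from just below
`w` to `u`, across `{u, v}`, and up the tree path from `v` to just below `w`. A tree edge
`{x, p x}` on it with `p x ≠ w`, say on the side of `u`, is an edge of type (i), witnessed by
`{u, v}`: `u` is below `x`, while `v` is not below `p x` because `p x` is deeper than the LCA.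
If both sides are nonempty, neither of `u`, `v` is an ancestor of the other, so `{u, v}` is of
type (ii). Depth decreases strictly along each side, and a vertex on both sides would be a common
ancestor deeper than `w`, so the vertices are distinct. -/

open Function

/-- `u` is an ancestor of `v` in the rooted forest given by parent pointers `p`. -/
def IsAncestor {V : Type} (p : V → V) (u v : V) : Prop := ∃ i : ℕ, p^[i] v = u

/-- The depth of `v`: the least `i` with `p^[i+1] v = p^[i] v`. -/
noncomputable def dep {V : Type} (p : V → V) (v : V) : ℕ :=
  sInf {i : ℕ | p^[i + 1] v = p^[i] v}

/-- The depth of the rooted tree `p`. -/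
noncomputable def treeDep {V : Type} [Fintype V] (p : V → V) : ℕ :=
  Finset.univ.sup (dep p)

/-- `w` is the lowest common ancestor of `(u, v)`: a common ancestor of maximal depth. -/
def IsLCA {V : Type} (p : V → V) (u v w : V) : Prop :=
  IsAncestor p w u ∧ IsAncestor p w v ∧
    ∀ x, IsAncestor p x u → IsAncestor p x v → dep p x ≤ dep p w

/-- The auxiliary graph `G'` on `V' = V \ {r}` (with `r` isolated): edges are
(i) `{v, p v}` for `v ≠ r` such that some edge `{x, y}` of `G` has `x` in the subtree of `v`
and `y` outside the subtree of `p v`; (ii) non-tree edges `{u, v}` of `G` such that neither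
endpoint is an ancestor of the other. -/
def auxGraph {V : Type} (G : SimpleGraph V) (p : V → V) (r : V) : SimpleGraph V :=
  SimpleGraph.fromRel (fun a b =>
    (a ≠ r ∧ b = p a ∧ ∃ x y, G.Adj x y ∧ IsAncestor p a x ∧ ¬ IsAncestor p (p a) y)
    ∨ (G.Adj a b ∧ p a ≠ b ∧ p b ≠ a ∧ ¬ IsAncestor p a b ∧ ¬ IsAncestor p b a))

theorem List.isChain_iterate {α : Type*} {R : α → α → Prop} {f : α → α} {a : α} {n : ℕ}
    (h : ∀ i, i + 1 < n → R (f^[i] a) (f^[i + 1] a)) : (List.iterate f a n).IsChain R := by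
  rw [← List.range_map_iterate, List.isChain_map, List.isChain_range]
  exact fun i hi => h i (by omega)

section ParentPointers

variable {V : Type} {p : V → V}

theorem iterate_succ_ne_of_lt_dep {v : V} {i : ℕ} (h : i < dep p v) :
    p^[i + 1] v ≠ p^[i] v :=
  fun he => (Nat.sInf_le he).not_gt h

theorem dep_eq_zero_of_isFixedPt {v : V} (h : IsFixedPt p v) : dep p v = 0 :=
  Nat.sInf_eq_zero.mpr (Or.inl (by simp [h.eq]))

theorem dep_le_iff (hstab : ∀ v : V, ∃ i : ℕ, p^[i + 1] v = p^[i] v) {v : V} {n : ℕ} :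
    dep p v ≤ n ↔ p^[n + 1] v = p^[n] v := by
  refine ⟨fun h => ?_, fun h => Nat.sInf_le h⟩
  have hfix : IsFixedPt p (p^[dep p v] v) := by
    have : p^[dep p v + 1] v = p^[dep p v] v := Nat.sInf_mem (hstab v)
    rwa [iterate_succ_apply'] at this
  obtain ⟨m, rfl⟩ := Nat.exists_eq_add_of_le h
  rw [show dep p v + m + 1 = (m + 1) + dep p v by omega,
    show dep p v + m = m + dep p v by omega, iterate_add_apply p (m + 1),
    iterate_add_apply p m (dep p v), iterate_fixed hfix, iterate_fixed hfix]

theorem dep_iterate (hstab : ∀ v : V, ∃ i : ℕ, p^[i + 1] v = p^[i] v) (v : V) (i : ℕ) :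
    dep p (p^[i] v) = dep p v - i := by
  refine eq_of_forall_ge_iff fun n => ?_
  rw [dep_le_iff hstab, Nat.sub_le_iff_le_add, dep_le_iff hstab, ← iterate_add_apply,
    ← iterate_add_apply, add_right_comm]

theorem IsAncestor.eq_of_dep_le (hstab : ∀ v : V, ∃ i : ℕ, p^[i + 1] v = p^[i] v) {x y : V}
    (h : IsAncestor p x y) (hd : dep p y ≤ dep p x) : x = y := by
  obtain ⟨i, rfl⟩ := h
  rw [dep_iterate hstab] at hd
  rcases Nat.eq_zero_or_pos i with rfl | hi
  · rfl
  · have hy : dep p y = 0 := by omega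
    have hfix : p y = y := by simpa [hy] using (dep_le_iff hstab).1 hy.le
    exact iterate_fixed hfix i

theorem nodup_iterate (hstab : ∀ v : V, ∃ i : ℕ, p^[i + 1] v = p^[i] v) (x : V) {n : ℕ}
    (hn : n ≤ dep p x + 1) : (List.iterate p x n).Nodup := by
  rw [← List.range_map_iterate]
  refine List.nodup_range.map_on fun i hi j hj hij => ?_
  have := congrArg (dep p) hij
  simp only [dep_iterate hstab] at this
  simp only [List.mem_range] at hi hj
  omega

end ParentPointers

section AuxGraph

variable {V : Type} {G : SimpleGraph V} {p : V → V} {r : V}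

theorem auxGraph_adj_parent {a x y : V} (ha : a ≠ r) (hpa : p a ≠ a) (hxy : G.Adj x y)
    (hax : IsAncestor p a x) (hy : ¬ IsAncestor p (p a) y) : (auxGraph G p r).Adj a (p a) :=
  (SimpleGraph.fromRel_adj _ _ _).2 ⟨hpa.symm, .inl (.inl ⟨ha, rfl, x, y, hxy, hax, hy⟩)⟩

theorem auxGraph_adj_of_not_isAncestor {a b : V} (hab : G.Adj a b) (hpa : p a ≠ b)
    (hpb : p b ≠ a) (hab' : ¬ IsAncestor p a b) (hba : ¬ IsAncestor p b a) :
    (auxGraph G p r).Adj a b :=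
  (SimpleGraph.fromRel_adj _ _ _).2 ⟨hab.ne, .inl (.inr ⟨hab, hpa, hpb, hab', hba⟩)⟩

end AuxGraph

section FundamentalCycle

variable {V : Type} {p : V → V} {u v w : V}

theorem IsLCA.symm (h : IsLCA p u v w) : IsLCA p v u w :=
  ⟨h.2.1, h.1, fun x hxv hxu => h.2.2 x hxu hxv⟩

theorem IsLCA.not_isAncestor (h : IsLCA p u v w) {z : V} (hzu : IsAncestor p z u)
    (hz : dep p w < dep p z) : ¬ IsAncestor p z v :=
  fun hzv => (h.2.2 z hzu hzv).not_gt hz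

theorem IsLCA.auxGraph_adj_iterate (hstab : ∀ v : V, ∃ i : ℕ, p^[i + 1] v = p^[i] v)
    {G : SimpleGraph V} {r : V} (hr : p r = r) (h : IsLCA p u v w) (huv : G.Adj u v) {i : ℕ}
    (hi : i + 1 < dep p u - dep p w) : (auxGraph G p r).Adj (p^[i] u) (p^[i + 1] u) := by
  have hdi := dep_iterate hstab u i
  have hdi1 := dep_iterate hstab u (i + 1)
  rw [iterate_succ_apply'] at hdi1 ⊢
  refine auxGraph_adj_parent ?_ ?_ huv ⟨i, rfl⟩
    (h.not_isAncestor ⟨i + 1, iterate_succ_apply' ..⟩ (by omega))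
  · intro hir
    rw [hir, dep_eq_zero_of_isFixedPt hr] at hdi
    omega
  · rw [← iterate_succ_apply' p i u]
    exact iterate_succ_ne_of_lt_dep (by omega)

theorem IsLCA.auxGraph_adj {G : SimpleGraph V} {r : V} (h : IsLCA p u v w) (huv : G.Adj u v)
    (hpu : p u ≠ v) (hpv : p v ≠ u) (hu : dep p w < dep p u) (hv : dep p w < dep p v) :
    (auxGraph G p r).Adj u v :=
  auxGraph_adj_of_not_isAncestor huv hpu hpv (h.not_isAncestor (z := u) ⟨0, rfl⟩ hu)
    (h.symm.not_isAncestor (z := v) ⟨0, rfl⟩ hv)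

/-- The vertices of the fundamental cycle of `{u, v}` other than `w`, in cyclic order: from the
child of `w` on the side of `u` down to `u`, then from `v` up to the child of `w` on its side. -/
noncomputable def fundCycleSupport (p : V → V) (u v w : V) : List V :=
  (List.iterate p u (dep p u - dep p w)).reverse ++ List.iterate p v (dep p v - dep p w)

theorem length_fundCycleSupport :
    (fundCycleSupport p u v w).length = (dep p u - dep p w) + (dep p v - dep p w) := by
  simp [fundCycleSupport]

theorem IsLCA.fundCycleSupport_ne_nil (hstab : ∀ v : V, ∃ i : ℕ, p^[i + 1] v = p^[i] v)
    (h : IsLCA p u v w) (huv : u ≠ v) : fundCycleSupport p u v w ≠ [] := by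
  intro hnil
  have hlen := congrArg List.length hnil
  rw [length_fundCycleSupport, List.length_nil] at hlen
  have hwu := h.1.eq_of_dep_le hstab (by omega)
  have hwv := h.2.1.eq_of_dep_le hstab (by omega)
  exact huv (hwu.symm.trans hwv)

theorem IsLCA.nodup_fundCycleSupport (hstab : ∀ v : V, ∃ i : ℕ, p^[i + 1] v = p^[i] v)
    (h : IsLCA p u v w) : (fundCycleSupport p u v w).Nodup := by
  refine List.nodup_append.2 ⟨List.nodup_reverse.2 (nodup_iterate hstab u (by omega)),
    nodup_iterate hstab v (by omega), ?_⟩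
  simp only [List.mem_reverse, List.mem_iterate]
  rintro _ ⟨i, hi, rfl⟩ _ ⟨j, hj, rfl⟩ hij
  exact h.not_isAncestor ⟨i, rfl⟩ (by rw [dep_iterate hstab]; omega) ⟨j, hij.symm⟩

theorem IsLCA.isChain_fundCycleSupport (hstab : ∀ v : V, ∃ i : ℕ, p^[i + 1] v = p^[i] v)
    {G : SimpleGraph V} {r : V} (hr : p r = r) (h : IsLCA p u v w) (huv : G.Adj u v)
    (hpu : p u ≠ v) (hpv : p v ≠ u) : (fundCycleSupport p u v w).IsChain (auxGraph G p r).Adj := by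
  refine List.IsChain.append ?_ ?_ ?_
  · exact List.isChain_reverse.2 <| List.isChain_iterate fun i hi =>
      (h.auxGraph_adj_iterate hstab hr huv hi).symm
  · exact List.isChain_iterate fun i hi => h.symm.auxGraph_adj_iterate hstab hr huv.symm hi
  · rw [List.getLast?_reverse]
    intro x hx y hy
    have hk : 0 < dep p u - dep p w := by
      by_contra h0
      simp [Nat.eq_zero_of_not_pos h0] at hx
    have hl : 0 < dep p v - dep p w := by
      by_contra h0
      simp [Nat.eq_zero_of_not_pos h0] at hy
    rw [List.head?_eq_getElem?, List.getElem?_iterate _ _ _ _ hk] at hx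
    rw [List.head?_eq_getElem?, List.getElem?_iterate _ _ _ _ hl] at hy
    cases hx
    cases hy
    exact h.auxGraph_adj huv hpu hpv (by omega) (by omega)

end FundamentalCycle

theorem stmt8_general {V : Type} [Fintype V]
    (G : SimpleGraph V) (p : V → V) (r : V)
    (hstab : ∀ v : V, ∃ i : ℕ, p^[i + 1] v = p^[i] v)
    (hr : p r = r)
    (u v w : V) (huv : G.Adj u v) (hnt1 : p u ≠ v) (hnt2 : p v ≠ u)
    (hlca : IsLCA p u v w) :
    ∃ (a b : V) (q : (auxGraph G p r).Walk a b), q.IsPath ∧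
      q.length ≤ 2 * treeDep p ∧
      (∀ i : ℕ, i < dep p u - dep p w → p^[i] u ∈ q.support) ∧
      (∀ j : ℕ, j < dep p v - dep p w → p^[j] v ∈ q.support) := by
  have hne := hlca.fundCycleSupport_ne_nil hstab huv.ne
  have hchain := hlca.isChain_fundCycleSupport hstab hr huv hnt1 hnt2
  refine ⟨_, _, .ofSupport _ hne hchain, ?_, ?_, ?_, ?_⟩
  · rw [SimpleGraph.Walk.isPath_def, SimpleGraph.Walk.support_ofSupport]
    exact hlca.nodup_fundCycleSupport hstab
  · have hu : dep p u ≤ treeDep p := Finset.le_sup (Finset.mem_univ u)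
    have hv : dep p v ≤ treeDep p := Finset.le_sup (Finset.mem_univ v)
    rw [SimpleGraph.Walk.length_ofSupport, length_fundCycleSupport]
    omega
  · intro i hi
    rw [SimpleGraph.Walk.support_ofSupport]
    exact List.mem_append_left _ (List.mem_reverse.2 (List.mem_iterate.2 ⟨i, hi, rfl⟩))
  · intro j hj
    rw [SimpleGraph.Walk.support_ofSupport]
    exact List.mem_append_right _ (List.mem_iterate.2 ⟨j, hj, rfl⟩)

theorem stmt8 {V : Type} [Fintype V] [DecidableEq V]
    (G : SimpleGraph V) (p : V → V) (r : V)
    (hG : G.Connected) (hcard : 2 ≤ Fintype.card V)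
    (hstab : ∀ v : V, ∃ i : ℕ, p^[i + 1] v = p^[i] v)
    (hr : p r = r) (hroot : ∀ v : V, p v = v → v = r)
    (hspan : ∀ v : V, v ≠ r → G.Adj v (p v))
    (u v w : V) (huv : G.Adj u v) (hnt1 : p u ≠ v) (hnt2 : p v ≠ u)
    (hdep : dep p v ≤ dep p u) (hlca : IsLCA p u v w) :
    ∃ (a b : V) (q : (auxGraph G p r).Walk a b), q.IsPath ∧
      q.length ≤ 2 * treeDep p ∧
      (∀ i : ℕ, i < dep p u - dep p w → p^[i] u ∈ q.support) ∧
      (∀ j : ℕ, j < dep p v - dep p w → p^[j] v ∈ q.support) :=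
  stmt8_general G p r hstab hr u v w huv hnt1 hnt2 hlca
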